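/- arXiv:2504.09306 — 7 statements merged into one kernel-verified Lean document; each statement's English description precedes it below -/
import Mathlib

section
/- Let N ≥ 2 be an integer and α a real number with (8−N)/3 ≤ α ≤ N. Then the map λ ↦ (γ_α + λ)²/(γ̂_α² + λ) is monotone increasing on [0, ∞), where γ_α = ((N−2)/2)² − ((α−2)/2)² and γ̂_α = (N + α − 4)/2 (in the case γ̂_α = 0 and λ = 0 the quotient is interpreted as ((N−α)/2)²). -/
/-- for `N ≥ 2` and `(8−N)/3 ≤ α ≤ N`, the map
`λ ↦ (γ_α + λ)²/(γ̂_α² + λ)` is monotone increasing on `[0,∞)`, with the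
convention that when `γ̂_α² + λ = 0` the quotient is `((N−α)/2)²`. -/
theorem stmt3 (N : ℕ) (hN : 2 ≤ N) (α : ℝ)
    (hα₁ : (8 - (N : ℝ)) / 3 ≤ α) (hα₂ : α ≤ N)
    (γ γhat : ℝ)
    (hγ : γ = ((N - 2 : ℝ) / 2) ^ 2 - ((α - 2) / 2) ^ 2)
    (hγhat : γhat = ((N : ℝ) + α - 4) / 2)
    (g : ℝ → ℝ)
    (hg : ∀ lam, g lam =
      if γhat ^ 2 + lam = 0 then (((N : ℝ) - α) / 2) ^ 2
      else (γ + lam) ^ 2 / (γhat ^ 2 + lam)) :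
    MonotoneOn g (Set.Ici 0) := by
  have ha : (0:ℝ) ≤ (N - α) / 2 := by linarith
  have hb : (0:ℝ) ≤ ((N:ℝ) + 3 * α - 8) / 2 := by linarith
  have hγhatnn : 0 ≤ γhat := by rw [hγhat]; linarith
  have hγeq : γ = ((N - α) / 2) * γhat := by rw [hγ, hγhat]; ring
  have hγnn : 0 ≤ γ := by rw [hγeq]; exact mul_nonneg ha hγhatnn
  have hγle : γ ≤ 2 * γhat ^ 2 := by
    have : 2 * γhat ^ 2 - γ = γhat * (((N:ℝ) + 3 * α - 8) / 2) := by
      rw [hγ, hγhat]; ring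
    nlinarith [mul_nonneg hγhatnn hb]
  intro x hx y hy hxy
  simp only [Set.mem_Ici] at hx hy
  rw [hg, hg]
  by_cases hdx : γhat ^ 2 + x = 0
  · -- then x = 0 and γhat = 0, hence γ = 0 and (N-α)/2 = 0
    have hgh0 : γhat = 0 := by nlinarith [sq_nonneg γhat]
    have hx0 : x = 0 := by nlinarith [sq_nonneg γhat]
    have hγ0 : γ = 0 := by nlinarith
    have hNα : ((N:ℝ) - α) / 2 = 0 := by
      have : (N:ℝ) + α - 4 = 0 := by
        have := hγhat; rw [hgh0] at this; linarith [this.symm ▸ (rfl : ((N:ℝ)+α-4)/2 = ((N:ℝ)+α-4)/2)]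
      linarith
    rw [if_pos hdx]
    by_cases hdy : γhat ^ 2 + y = 0
    · rw [if_pos hdy]
    · rw [if_neg hdy, hNα, hγ0, hgh0]
      have hy' : (0:ℝ) < 0 ^ 2 + y := by
        rw [hgh0] at hdy
        rcases lt_or_eq_of_le hy with h | h
        · simpa using h
        · exfalso; apply hdy; rw [← h]; ring
      rw [zero_pow (by norm_num)]
      positivity
  · have hdx' : 0 < γhat ^ 2 + x := lt_of_le_of_ne (by positivity) (Ne.symm hdx)
    have hdy' : 0 < γhat ^ 2 + y := by nlinarith
    rw [if_neg hdx, if_neg (ne_of_gt hdy')]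
    rw [div_le_div_iff₀ hdx' hdy']
    have key : (γ - γhat ^ 2) ^ 2 ≤ (γhat ^ 2 + x) * (γhat ^ 2 + y) := by
      nlinarith [mul_nonneg hx hy, mul_nonneg hx (sq_nonneg γhat),
        mul_nonneg hy (sq_nonneg γhat), sq_nonneg γhat, mul_nonneg hγnn hγnn]
    have h2 := mul_nonneg (sub_nonneg.2 hxy) (sub_nonneg.2 key)
    have h3 : (γ + y) ^ 2 * (γhat ^ 2 + x) - (γ + x) ^ 2 * (γhat ^ 2 + y)
        = (y - x) * ((γhat ^ 2 + x) * (γhat ^ 2 + y) - (γ - γhat ^ 2) ^ 2) := by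
      ring
    linarith [h2, h3.ge, h3.le]
end

section
/- The one-dimensional Rellich inequality: for every C² function ψ : (0,∞) → ℝ with compact support contained in (0,∞), one has ∫₀^∞ |ψ''(t)|² dt ≥ (9/16) ∫₀^∞ t⁻⁴ |ψ(t)|² dt. -/
open MeasureTheory Set
open scoped Interval

/-- Integration by parts: `∫ t⁻ᵏ f f' = (k/2) ∫ t⁻⁽ᵏ⁺¹⁾ f²` when `f` vanishes at endpoints. -/
lemma rellich_ibp (f : ℝ → ℝ) (hf : ContDiff ℝ 1 f) (a b : ℝ) (ha : 0 < a) (hab : a ≤ b)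
    (hfa : f a = 0) (hfb : f b = 0) (k : ℕ) (hk : 1 ≤ k) :
    ∫ t in a..b, (t⁻¹) ^ k * (f t * deriv f t)
      = ((k : ℝ) / 2) * ∫ t in a..b, (t⁻¹) ^ (k + 1) * f t ^ 2 := by
  have hpos : ∀ t ∈ [[a, b]], (0:ℝ) < t := by
    intro t ht
    rw [uIcc_of_le hab] at ht
    exact lt_of_lt_of_le ha ht.1
  have hfd : Differentiable ℝ f := hf.differentiable one_ne_zero
  have hf' : Continuous (deriv f) := hf.continuous_deriv le_rfl
  have hXc : ∀ n : ℕ, ContinuousOn (fun t : ℝ => (t⁻¹) ^ n) [[a, b]] := fun n =>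
    (continuousOn_id.inv₀ fun t ht => ne_of_gt (hpos t ht)).pow n
  have hu : ∀ t ∈ [[a, b]], HasDerivAt (fun t => f t ^ 2) (2 * f t * deriv f t) t := by
    intro t _
    have h := ((hfd t).hasDerivAt).fun_pow 2
    simpa [mul_comm, mul_assoc, mul_left_comm] using h
  have hv : ∀ t ∈ [[a, b]], HasDerivAt (fun t : ℝ => (t⁻¹) ^ k)
      (-(k : ℝ) * (t⁻¹) ^ (k + 1)) t := by
    intro t ht
    have ht0 : t ≠ 0 := ne_of_gt (hpos t ht)
    have h : HasDerivAt (fun i : ℝ => i⁻¹ ^ k) (↑k * t⁻¹ ^ (k - 1) * -(t ^ 2)⁻¹) t :=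
      (hasDerivAt_inv ht0).fun_pow k
    convert h using 1
    rw [← inv_pow]
    have hkk : (t⁻¹:ℝ) ^ (k - 1) * (t⁻¹) ^ 2 = (t⁻¹) ^ (k + 1) := by
      rw [← pow_add]
      congr 1
      omega
    rw [← hkk]
    ring
  have hint_u' : IntervalIntegrable (fun t => 2 * f t * deriv f t) volume a b :=
    ((continuous_const.mul hfd.continuous).mul hf').intervalIntegrable a b
  have hint_v' : IntervalIntegrable (fun t : ℝ => -(k : ℝ) * (t⁻¹) ^ (k + 1)) volume a b :=
    ((continuousOn_const.mul (hXc (k + 1)))).intervalIntegrable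
  have h0 := intervalIntegral.integral_deriv_mul_eq_sub hu hv hint_u' hint_v'
  rw [hfa, hfb] at h0
  simp only [ne_eq, OfNat.ofNat_ne_zero, not_false_eq_true, zero_pow, zero_mul, sub_zero,
    sub_self] at h0
  have hA : IntervalIntegrable (fun t => 2 * f t * deriv f t * (t⁻¹) ^ k) volume a b :=
    (((continuous_const.mul hfd.continuous).mul hf').continuousOn.mul (hXc k)).intervalIntegrable
  have hB : IntervalIntegrable (fun t => f t ^ 2 * (-(k : ℝ) * (t⁻¹) ^ (k + 1))) volume a b :=
    (((hfd.continuous.pow 2).continuousOn).mul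
      (continuousOn_const.mul (hXc (k + 1)))).intervalIntegrable
  rw [intervalIntegral.integral_add hA hB] at h0
  have e1 : ∫ t in a..b, 2 * f t * deriv f t * (t⁻¹) ^ k
      = 2 * ∫ t in a..b, (t⁻¹) ^ k * (f t * deriv f t) := by
    rw [← intervalIntegral.integral_const_mul]
    congr 1
    funext t
    ring
  have e2 : ∫ t in a..b, f t ^ 2 * (-(k : ℝ) * (t⁻¹) ^ (k + 1))
      = (-(k : ℝ)) * ∫ t in a..b, (t⁻¹) ^ (k + 1) * f t ^ 2 := by
    rw [← intervalIntegral.integral_const_mul]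
    congr 1
    funext t
    ring
  rw [e1, e2] at h0
  linarith

/-- Weighted Hardy step: `∫ t⁻²ᵐ f'² ≥ ((2m+1)/2)² ∫ t⁻⁽²ᵐ⁺²⁾ f²`. -/
lemma rellich_step (f : ℝ → ℝ) (hf : ContDiff ℝ 1 f) (a b : ℝ) (ha : 0 < a) (hab : a ≤ b)
    (hfa : f a = 0) (hfb : f b = 0) (m : ℕ) :
    ∫ t in a..b, (t⁻¹) ^ (2 * m) * (deriv f t) ^ 2
      ≥ ((2 * (m:ℝ) + 1) / 2) ^ 2 * ∫ t in a..b, (t⁻¹) ^ (2 * m + 2) * f t ^ 2 := by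
  have hpos : ∀ t ∈ [[a, b]], (0:ℝ) < t := by
    intro t ht
    rw [uIcc_of_le hab] at ht
    exact lt_of_lt_of_le ha ht.1
  have hfd : Differentiable ℝ f := hf.differentiable one_ne_zero
  have hf' : Continuous (deriv f) := hf.continuous_deriv le_rfl
  have hXc : ∀ n : ℕ, ContinuousOn (fun t : ℝ => (t⁻¹) ^ n) [[a, b]] := fun n =>
    (continuousOn_id.inv₀ fun t ht => ne_of_gt (hpos t ht)).pow n
  have hI := rellich_ibp f hf a b ha hab hfa hfb (2 * m + 1) (by omega)
  have he : 2 * m + 1 + 1 = 2 * m + 2 := by omega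
  rw [he] at hI
  have hcast : ((2 * m + 1 : ℕ) : ℝ) = 2 * (m:ℝ) + 1 := by push_cast; ring
  rw [hcast] at hI
  have hintL : IntervalIntegrable (fun t => (t⁻¹) ^ (2 * m) * (deriv f t) ^ 2) volume a b :=
    ((hXc (2 * m)).mul ((hf'.pow 2).continuousOn)).intervalIntegrable
  have hint1 : IntervalIntegrable (fun t => (t⁻¹) ^ (2 * m + 1) * (f t * deriv f t)) volume a b :=
    ((hXc (2 * m + 1)).mul ((hfd.continuous.mul hf').continuousOn)).intervalIntegrable
  have hint2 : IntervalIntegrable (fun t => (t⁻¹) ^ (2 * m + 2) * f t ^ 2) volume a b :=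
    ((hXc (2 * m + 2)).mul ((hfd.continuous.pow 2).continuousOn)).intervalIntegrable
  have hintR : IntervalIntegrable (fun t =>
      (2 * (m:ℝ) + 1) * ((t⁻¹) ^ (2 * m + 1) * (f t * deriv f t))
        - ((2 * (m:ℝ) + 1) / 2) ^ 2 * ((t⁻¹) ^ (2 * m + 2) * f t ^ 2)) volume a b :=
    (hint1.const_mul _).sub (hint2.const_mul _)
  have hmono : (∫ t in a..b,
      ((2 * (m:ℝ) + 1) * ((t⁻¹) ^ (2 * m + 1) * (f t * deriv f t))
        - ((2 * (m:ℝ) + 1) / 2) ^ 2 * ((t⁻¹) ^ (2 * m + 2) * f t ^ 2)))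
      ≤ ∫ t in a..b, (t⁻¹) ^ (2 * m) * (deriv f t) ^ 2 := by
    apply intervalIntegral.integral_mono_on hab hintR hintL
    intro t ht
    have e1 : (t⁻¹:ℝ) ^ (2 * m) = ((t⁻¹) ^ m) ^ 2 := by
      rw [← pow_mul]; congr 1; omega
    have e2 : (t⁻¹:ℝ) ^ (2 * m + 1) = (t⁻¹) ^ m * (t⁻¹) ^ (m + 1) := by
      rw [← pow_add]; congr 1; omega
    have e3 : (t⁻¹:ℝ) ^ (2 * m + 2) = ((t⁻¹) ^ (m + 1)) ^ 2 := by
      rw [← pow_mul]; congr 1; omega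
    rw [e1, e2, e3]
    nlinarith [sq_nonneg ((t⁻¹) ^ m * deriv f t - ((2 * (m:ℝ) + 1) / 2) * (t⁻¹) ^ (m + 1) * f t)]
  have hsplit : (∫ t in a..b,
      ((2 * (m:ℝ) + 1) * ((t⁻¹) ^ (2 * m + 1) * (f t * deriv f t))
        - ((2 * (m:ℝ) + 1) / 2) ^ 2 * ((t⁻¹) ^ (2 * m + 2) * f t ^ 2)))
      = (2 * (m:ℝ) + 1) * (∫ t in a..b, (t⁻¹) ^ (2 * m + 1) * (f t * deriv f t))
        - ((2 * (m:ℝ) + 1) / 2) ^ 2 * ∫ t in a..b, (t⁻¹) ^ (2 * m + 2) * f t ^ 2 := by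
    rw [intervalIntegral.integral_sub (hint1.const_mul _) (hint2.const_mul _),
      intervalIntegral.integral_const_mul, intervalIntegral.integral_const_mul]
  rw [hsplit, hI] at hmono
  have hkey : (2 * (m:ℝ) + 1) * ((2 * (m:ℝ) + 1) / 2
        * ∫ t in a..b, (t⁻¹) ^ (2 * m + 2) * f t ^ 2)
      - ((2 * (m:ℝ) + 1) / 2) ^ 2 * (∫ t in a..b, (t⁻¹) ^ (2 * m + 2) * f t ^ 2)
      = ((2 * (m:ℝ) + 1) / 2) ^ 2 * ∫ t in a..b, (t⁻¹) ^ (2 * m + 2) * f t ^ 2 := by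
    ring
  linarith [hmono, hkey]

/-- one-dimensional Rellich inequality: for `ψ ∈ C²_c((0,∞))`,
`∫₀^∞ |ψ''|² dt ≥ (9/16) ∫₀^∞ t⁻⁴ |ψ|² dt`. -/
theorem stmt5 (ψ : ℝ → ℝ) (hψ : ContDiff ℝ 2 ψ)
    (hsupp : HasCompactSupport ψ) (hsupp' : tsupport ψ ⊆ Ioi 0) :
    ∫ t in Ioi (0 : ℝ), (deriv (deriv ψ) t) ^ 2 ≥
      (9 / 16) * ∫ t in Ioi (0 : ℝ), t⁻¹ ^ 4 * (ψ t) ^ 2 := by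
  rcases (tsupport ψ).eq_empty_or_nonempty with hemp | hne
  · have hψ0 : ψ = 0 := by
      funext x
      have : x ∉ tsupport ψ := by rw [hemp]; exact notMem_empty x
      exact image_eq_zero_of_notMem_tsupport this
    subst hψ0
    have h1 : deriv (0 : ℝ → ℝ) = 0 := by
      funext x
      simp [show (0 : ℝ → ℝ) = fun _ => (0:ℝ) from rfl]
    simp [h1]
  · have hK : IsCompact (tsupport ψ) := hsupp
    set K := tsupport ψ with hKdef
    have hmK : sInf K ∈ K := hK.sInf_mem hne
    have hMK : sSup K ∈ K := hK.sSup_mem hne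
    have hm_pos : 0 < sInf K := hsupp' hmK
    set a : ℝ := sInf K / 2 with hadef
    set b : ℝ := sSup K + 1 with hbdef
    have ha : 0 < a := by positivity
    have hmM : sInf K ≤ sSup K := le_csSup hK.bddAbove hmK
    have hab : a ≤ b := by
      have : a < sInf K := by rw [hadef]; linarith
      linarith
    have hKIcc : K ⊆ Icc (sInf K) (sSup K) := fun x hx =>
      ⟨csInf_le hK.bddBelow hx, le_csSup hK.bddAbove hx⟩
    have hKsub : K ⊆ Ioc a b := by
      intro x hx
      rcases hKIcc hx with ⟨h1, h2⟩
      constructor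
      · rw [hadef]; linarith
      · rw [hbdef]; linarith
    have hs1 : Function.support ψ ⊆ K := subset_tsupport ψ
    have hs2 : Function.support (deriv ψ) ⊆ K := support_deriv_subset
    have hs3 : Function.support (deriv (deriv ψ)) ⊆ K := by
      refine support_deriv_subset.trans ?_
      exact closure_minimal hs2 hK.isClosed
    have hz : ∀ (g : ℝ → ℝ), Function.support g ⊆ K → g a = 0 ∧ g b = 0 := by
      intro g hg
      constructor
      · by_contra h
        rcases hKIcc (hg h) with ⟨h1, _⟩
        rw [hadef] at h1; linarith
      · by_contra h
        rcases hKIcc (hg h) with ⟨_, h2⟩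
        rw [hbdef] at h2; linarith
    have hconv : ∀ (g : ℝ → ℝ), Function.support g ⊆ K →
        ∫ t in Ioi (0:ℝ), g t = ∫ t in a..b, g t := by
      intro g hg
      have h1 : ∀ x, x ∉ Ioi (0:ℝ) → g x = 0 := by
        intro x hx
        by_contra h
        exact hx (hsupp' (hg h))
      rw [setIntegral_eq_integral_of_forall_compl_eq_zero h1,
        ← intervalIntegral.integral_eq_integral_of_support_subset (hg.trans hKsub)]
    have hψ1 : ContDiff ℝ 1 ψ := hψ.of_le (by norm_num)
    have hdψ1 : ContDiff ℝ 1 (deriv ψ) := by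
      have h2 : ContDiff ℝ (1 + 1) ψ := by norm_num; exact hψ
      exact (contDiff_succ_iff_deriv.mp h2).2.2
    have hstep1 := rellich_step ψ hψ1 a b ha hab (hz ψ hs1).1 (hz ψ hs1).2 1
    have hstep0 := rellich_step (deriv ψ) hdψ1 a b ha hab (hz _ hs2).1 (hz _ hs2).2 0
    simp only [Nat.mul_zero, pow_zero, one_mul, Nat.cast_zero, mul_zero, zero_add,
      Nat.cast_one] at hstep0 hstep1
    have hconv1 : ∫ t in Ioi (0:ℝ), (deriv (deriv ψ) t) ^ 2
        = ∫ t in a..b, (deriv (deriv ψ) t) ^ 2 := by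
      apply hconv
      intro x hx
      apply hs3
      intro h
      simp only [Function.mem_support] at hx
      rw [h] at hx
      simp at hx
    have hconv2 : ∫ t in Ioi (0:ℝ), t⁻¹ ^ 4 * (ψ t) ^ 2
        = ∫ t in a..b, t⁻¹ ^ 4 * (ψ t) ^ 2 := by
      apply hconv
      intro x hx
      apply hs1
      intro h
      simp only [Function.mem_support] at hx
      rw [h] at hx
      simp at hx
    rw [hconv1, hconv2]
    have h1 : ((0:ℝ) + 1) / 2 = 1 / 2 := by norm_num
    have h2 : ((2 * (1:ℝ) + 1) / 2) ^ 2 = 9 / 4 := by norm_num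
    norm_num at hstep0 hstep1 ⊢
    linarith
end

section
/- Let N ≥ 2 and α ∈ ℝ, and set γ_α = ((N−2)/2)² − ((α−2)/2)², γ̄_α = ((N−2)/2)² + ((α−2)/2)², γ̂_α = (N + α − 4)/2. Fix λ ≥ 0. For a nonzero ψ ∈ C²_c(ℝ) and ε > 0 define F_ε = (λ+γ_α)² ∫|ψ|² + 2ε²(λ+γ̄_α) ∫|ψ'|² + ε⁴ ∫|ψ''|² and G_ε = (λ+γ̂_α²) ∫|ψ|² + ε² ∫|ψ'|². Then F_ε/G_ε > (λ+γ_α)²/(λ+γ̂_α²) for every ε > 0, and F_ε/G_ε → (λ+γ_α)²/(λ+γ̂_α²) as ε → 0⁺ (assuming λ + γ̂_α² > 0). -/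
open MeasureTheory Set Filter

lemma integral_sq_pos_aux (f : ℝ → ℝ) (hf : Continuous f)
    (hsupp : HasCompactSupport f) (hne : f ≠ 0) : 0 < ∫ t, (f t) ^ 2 := by
  have hI : Integrable (fun t => (f t) ^ 2) := by
    have : HasCompactSupport (fun t => (f t) ^ 2) := by
      simpa [pow_two, Pi.mul_def] using hsupp.mul_left (f := f)
    exact (hf.pow 2).integrable_of_hasCompactSupport this
  rw [integral_pos_iff_support_of_nonneg (fun t => sq_nonneg _) hI]
  have hopen : IsOpen (Function.support fun t => (f t) ^ 2) :=
    isOpen_compl_singleton.preimage (hf.pow 2)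
  obtain ⟨x, hx⟩ := Function.ne_iff.mp hne
  have hx' : f x ≠ 0 := by simpa using hx
  exact hopen.measure_pos volume ⟨x, by simp [Function.support, pow_eq_zero_iff, hx']⟩

/-- for nonzero `ψ ∈ C²_c(ℝ)` and `ε > 0`, with
`F_ε = (λ+γ_α)²∫ψ² + 2ε²(λ+γ̄_α)∫ψ'² + ε⁴∫ψ''²` and
`G_ε = (λ+γ̂_α²)∫ψ² + ε²∫ψ'²`, one has `F_ε/G_ε > (λ+γ_α)²/(λ+γ̂_α²)` for all
`ε > 0`, and `F_ε/G_ε → (λ+γ_α)²/(λ+γ̂_α²)` as `ε → 0⁺`. -/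
theorem stmt7 (N : ℕ) (hN : 2 ≤ N) (α lam : ℝ) (hlam : 0 ≤ lam)
    (γ γbar γhat : ℝ)
    (hγ : γ = ((N - 2 : ℝ) / 2) ^ 2 - ((α - 2) / 2) ^ 2)
    (hγbar : γbar = ((N - 2 : ℝ) / 2) ^ 2 + ((α - 2) / 2) ^ 2)
    (hγhat : γhat = ((N : ℝ) + α - 4) / 2)
    (hpos : 0 < lam + γhat ^ 2)
    (ψ : ℝ → ℝ) (hψ : ContDiff ℝ 2 ψ) (hsupp : HasCompactSupport ψ)
    (hne : ψ ≠ 0)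
    (F G : ℝ → ℝ)
    (hF : ∀ ε, F ε = (lam + γ) ^ 2 * (∫ t, (ψ t) ^ 2)
        + 2 * ε ^ 2 * (lam + γbar) * (∫ t, (deriv ψ t) ^ 2)
        + ε ^ 4 * (∫ t, (deriv (deriv ψ) t) ^ 2))
    (hG : ∀ ε, G ε = (lam + γhat ^ 2) * (∫ t, (ψ t) ^ 2)
        + ε ^ 2 * (∫ t, (deriv ψ t) ^ 2)) :
    (∀ ε > 0, F ε / G ε > (lam + γ) ^ 2 / (lam + γhat ^ 2)) ∧
    Tendsto (fun ε => F ε / G ε) (nhdsWithin 0 (Ioi 0))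
      (nhds ((lam + γ) ^ 2 / (lam + γhat ^ 2))) := by
  set A := ∫ t, (ψ t) ^ 2 with hA
  set B := ∫ t, (deriv ψ t) ^ 2 with hB
  set C := ∫ t, (deriv (deriv ψ) t) ^ 2 with hC
  have hψc : Continuous ψ := hψ.continuous
  have hdc : Continuous (deriv ψ) := hψ.continuous_deriv (by norm_num)
  have hApos : 0 < A := integral_sq_pos_aux ψ hψc hsupp hne
  have hdne : deriv ψ ≠ 0 := by
    intro h
    have hdiff : Differentiable ℝ ψ := hψ.differentiable (by norm_num)
    obtain ⟨y, hy⟩ : ∃ y, y ∉ tsupport ψ := by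
      by_contra h'
      push_neg at h'
      exact hsupp.ne_univ (Set.eq_univ_iff_forall.mpr h')
    apply hne
    funext x
    have hxy := is_const_of_deriv_eq_zero hdiff (fun t => congrFun h t) x y
    simp [hxy, image_eq_zero_of_notMem_tsupport hy]
  have hBpos : 0 < B := integral_sq_pos_aux _ hdc hsupp.deriv hdne
  have hCnn : 0 ≤ C := integral_nonneg fun t => sq_nonneg _
  have hD : (lam + γ) ^ 2 < 2 * (lam + γbar) * (lam + γhat ^ 2) := by
    have key : 2 * (lam + γbar) * (lam + γhat ^ 2) - (lam + γ) ^ 2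
        = (lam + γhat ^ 2) ^ 2 + 4 * lam * ((α - 2) / 2) ^ 2 := by
      rw [hγ, hγbar, hγhat]; ring
    nlinarith [key, mul_pos hpos hpos, mul_nonneg hlam (sq_nonneg ((α - 2) / 2))]
  have hGpos : ∀ ε : ℝ, 0 < G ε := fun ε => by
    rw [hG]
    have := mul_pos hpos hApos
    nlinarith [mul_nonneg (sq_nonneg ε) hBpos.le]
  constructor
  · intro ε hε
    rw [gt_iff_lt, div_lt_div_iff₀ hpos (hGpos ε), hF, hG]
    have h1 : 0 < ε ^ 2 * (B * (2 * (lam + γbar) * (lam + γhat ^ 2) - (lam + γ) ^ 2)) :=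
      mul_pos (pow_pos hε 2) (mul_pos hBpos (by linarith))
    have h2 : 0 ≤ ε ^ 4 * C * (lam + γhat ^ 2) :=
      mul_nonneg (mul_nonneg (by positivity) hCnn) hpos.le
    nlinarith [h1, h2]
  · have hFe : F = fun ε => (lam + γ) ^ 2 * A + 2 * ε ^ 2 * (lam + γbar) * B + ε ^ 4 * C :=
      funext hF
    have hGe : G = fun ε => (lam + γhat ^ 2) * A + ε ^ 2 * B := funext hG
    have hc : ContinuousAt (fun ε => F ε / G ε) 0 := by
      apply ContinuousAt.div
      · rw [hFe]; fun_prop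
      · rw [hGe]; fun_prop
      · exact (hGpos 0).ne'
    have h0 : F 0 / G 0 = (lam + γ) ^ 2 / (lam + γhat ^ 2) := by
      rw [hF, hG]
      norm_num
      rw [mul_div_mul_right _ _ hApos.ne']
    have := tendsto_nhdsWithin_of_tendsto_nhds (s := Ioi (0:ℝ)) hc.tendsto
    rwa [h0] at this
end

section
/- Let N ≥ 2, α ∈ ℝ, λ ≥ 0, with γ_α = ((N−2)/2)² − ((α−2)/2)², γ̄_α = ((N−2)/2)² + ((α−2)/2)², γ̂_α = (N+α−4)/2, and suppose μ = (λ+γ_α)²/(λ+γ̂_α²) (with λ + γ̂_α² > 0). Then 2λ + 2γ̄_α − μ ≥ 0. -/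
/-- with `μ = (λ+γ_α)²/(λ+γ̂_α²)` one has `2λ + 2γ̄_α − μ ≥ 0`. -/
theorem stmt8 (N : ℕ) (hN : 2 ≤ N) (α lam : ℝ) (hlam : 0 ≤ lam)
    (γ γbar γhat : ℝ)
    (hγ : γ = ((N - 2 : ℝ) / 2) ^ 2 - ((α - 2) / 2) ^ 2)
    (hγbar : γbar = ((N - 2 : ℝ) / 2) ^ 2 + ((α - 2) / 2) ^ 2)
    (hγhat : γhat = ((N : ℝ) + α - 4) / 2)
    (hpos : 0 < lam + γhat ^ 2)
    (μ : ℝ) (hμ : μ = (lam + γ) ^ 2 / (lam + γhat ^ 2)) :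
    0 ≤ 2 * lam + 2 * γbar - μ := by
  set a : ℝ := ((N - 2 : ℝ) / 2) with ha
  set b : ℝ := ((α - 2) / 2) with hb
  have hhat : γhat = a + b := by rw [hγhat, ha, hb]; ring
  rw [sub_nonneg, hμ, div_le_iff₀ hpos, hγ, hγbar]
  rw [hhat] at hpos ⊢
  nlinarith [sq_nonneg (a + b), sq_nonneg ((a+b)^2 + 2*b^2), mul_nonneg hlam (sq_nonneg (a+b)), mul_nonneg hlam (sq_nonneg b), sq_nonneg lam]
end

section
/- For N ≥ 5 and α = 0, one has min over j = 0,1,2,... of (γ₀ + j(j+N−2))²/(γ̂₀² + j(j+N−2)) = N²/4 (the term with j = 0), where γ₀ = ((N−2)/2)² − 1 and γ̂₀ = (N−4)/2. Moreover, for N = 4 this minimum equals 3, and for N = 3 it equals 25/36. -/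
/-- for `α = 0`, with `γ₀ = ((N−2)/2)² − 1`, `γ̂₀ = (N−4)/2`, the
minimum over `j ∈ ℕ` of `(γ₀ + j(j+N−2))²/(γ̂₀² + j(j+N−2))` (with the `j = 0`
term interpreted as `(N/2)²` when `γ̂₀ = 0`) equals `N²/4` for `N ≥ 5`, equals `3`
for `N = 4`, and equals `25/36` for `N = 3`. -/
theorem stmt11 (N : ℕ) (γ γhat : ℝ)
    (hγ : γ = ((N - 2 : ℝ) / 2) ^ 2 - 1)
    (hγhat : γhat = ((N : ℝ) - 4) / 2)
    (q : ℕ → ℝ)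
    (hq : ∀ j : ℕ, q j =
      if γhat ^ 2 + (j : ℝ) * (j + N - 2) = 0 then ((N : ℝ) / 2) ^ 2
      else (γ + (j : ℝ) * (j + N - 2)) ^ 2 / (γhat ^ 2 + (j : ℝ) * (j + N - 2))) :
    (5 ≤ N → IsLeast {r : ℝ | ∃ j : ℕ, r = q j} ((N : ℝ) ^ 2 / 4)) ∧
    (N = 4 → IsLeast {r : ℝ | ∃ j : ℕ, r = q j} 3) ∧
    (N = 3 → IsLeast {r : ℝ | ∃ j : ℕ, r = q j} (25 / 36)) := by
  refine ⟨?_, ?_, ?_⟩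
  · -- N ≥ 5
    intro hN
    have hn : (5 : ℝ) ≤ (N : ℝ) := by exact_mod_cast hN
    constructor
    · refine ⟨0, ?_⟩
      rw [hq 0]
      have hden : γhat ^ 2 + (0 : ℕ) * ((0 : ℕ) + (N : ℝ) - 2) ≠ 0 := by
        push_cast
        rw [hγhat]
        nlinarith
      rw [if_neg hden]
      rw [hγ, hγhat]
      push_cast
      rw [eq_div_iff (by nlinarith)]
      ring
    · rintro r ⟨j, rfl⟩
      rw [hq j]
      have hj0 : (0 : ℝ) ≤ (j : ℝ) := Nat.cast_nonneg j
      have hL0 : (0 : ℝ) ≤ (j : ℝ) * ((j : ℝ) + (N : ℝ) - 2) := by nlinarith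
      split_ifs with h
      · nlinarith
      · have hpos : 0 < γhat ^ 2 + (j : ℝ) * ((j : ℝ) + (N : ℝ) - 2) := by
          rw [hγhat]; nlinarith
        rw [div_le_div_iff₀ (by norm_num) hpos, hγ, hγhat]
        rcases Nat.eq_zero_or_pos j with hj | hj
        · subst hj; push_cast; nlinarith
        · have hj1 : (1 : ℝ) ≤ (j : ℝ) := by exact_mod_cast hj
          have hLge : (N : ℝ) - 1 ≤ (j : ℝ) * ((j : ℝ) + (N : ℝ) - 2) := by
            nlinarith [mul_nonneg (by linarith : (0:ℝ) ≤ (j:ℝ) - 1)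
              (by linarith : (0:ℝ) ≤ (j:ℝ) + (N:ℝ) - 2)]
          have hkey : (0 : ℝ) ≤ (j : ℝ) * ((j : ℝ) + (N : ℝ) - 2) + (N:ℝ)^2/4 - 2*(N:ℝ) := by
            nlinarith
          nlinarith [mul_nonneg hL0 hkey]
  · -- N = 4
    rintro rfl
    constructor
    · refine ⟨1, ?_⟩
      rw [hq 1]
      have hden : γhat ^ 2 + (1 : ℕ) * ((1 : ℕ) + ((4:ℕ) : ℝ) - 2) ≠ 0 := by
        rw [hγhat]; push_cast; norm_num
      rw [if_neg hden, hγ, hγhat]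
      norm_num
    · rintro r ⟨j, rfl⟩
      rw [hq j]
      rcases Nat.eq_zero_or_pos j with hj | hj
      · subst hj
        rw [if_pos (by rw [hγhat]; push_cast; norm_num)]
        norm_num
      · have hj1 : (1 : ℝ) ≤ (j : ℝ) := by exact_mod_cast hj
        have hL : (3 : ℝ) ≤ (j : ℝ) * ((j : ℝ) + ((4:ℕ) : ℝ) - 2) := by
          push_cast
          nlinarith
        have hden : γhat ^ 2 + (j : ℝ) * ((j : ℝ) + ((4:ℕ) : ℝ) - 2) ≠ 0 := by
          rw [hγhat]; push_cast at hL ⊢; nlinarith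
        rw [if_neg hden, hγ, hγhat]
        have hpos : (0:ℝ) < (((4:ℕ):ℝ) - 4)/2 ^ 2 + (j : ℝ) * ((j : ℝ) + ((4:ℕ) : ℝ) - 2) := by
          push_cast at hL ⊢; nlinarith
        rw [le_div_iff₀ (by push_cast at hL ⊢; nlinarith)]
        push_cast at hL ⊢
        nlinarith
  · -- N = 3
    rintro rfl
    constructor
    · refine ⟨1, ?_⟩
      rw [hq 1]
      have hden : γhat ^ 2 + (1 : ℕ) * ((1 : ℕ) + ((3:ℕ) : ℝ) - 2) ≠ 0 := by
        rw [hγhat]; push_cast; norm_num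
      rw [if_neg hden, hγ, hγhat]
      norm_num
    · rintro r ⟨j, rfl⟩
      rw [hq j]
      have hj0 : (0 : ℝ) ≤ (j : ℝ) := Nat.cast_nonneg j
      have hden : γhat ^ 2 + (j : ℝ) * ((j : ℝ) + ((3:ℕ) : ℝ) - 2) ≠ 0 := by
        rw [hγhat]; push_cast; nlinarith
      rw [if_neg hden, hγ, hγhat]
      rcases Nat.eq_zero_or_pos j with hj | hj
      · subst hj; push_cast; norm_num
      · have hj1 : (1 : ℝ) ≤ (j : ℝ) := by exact_mod_cast hj
        have hL : (2 : ℝ) ≤ (j : ℝ) * ((j : ℝ) + ((3:ℕ) : ℝ) - 2) := by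
          push_cast; nlinarith
        rw [le_div_iff₀ (by push_cast at hL ⊢; nlinarith)]
        push_cast at hL ⊢
        nlinarith [mul_nonneg (by linarith : (0:ℝ) ≤ (j:ℝ)*((j:ℝ)+3-2) - 2)
          (by linarith : (0:ℝ) ≤ (j:ℝ)*((j:ℝ)+3-2) - 7/36)]
end

section
/- For N = 4 and α = 0, the minimum of (γ₀+λ_j)²/(γ̂₀²+λ_j) over j ≥ 1, where λ_j = j(j+2), γ₀ = 0, γ̂₀ = 0, equals 3 (attained at j = 1), while the j = 0 term (interpreted as (N/2)² = 4) is strictly larger. Hence the Hardy-Rellich infimum over radial functions (value 4) strictly exceeds the infimum over functions orthogonal to radial functions (value 3). -/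
/-- for `N = 4`, `α = 0` (`γ₀ = 0`, `γ̂₀ = 0`, `λ_j = j(j+2)`), the
minimum over `j ≥ 1` of `(γ₀+λ_j)²/(γ̂₀²+λ_j) = λ_j` equals `3`, attained at
`j = 1`, and is strictly smaller than the `j = 0` term `(N/2)² = 4`: the radial
Hardy-Rellich infimum (value `4`) strictly exceeds the infimum over functions
orthogonal to radial functions (value `3`). -/
theorem stmt18 (q : ℕ → ℝ)
    (hq : ∀ j : ℕ, q j = if ((j : ℝ) * (j + 2)) = 0 then ((4 : ℝ) / 2) ^ 2
      else ((j : ℝ) * (j + 2)) ^ 2 / ((j : ℝ) * (j + 2))) :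
    IsLeast {r : ℝ | ∃ j : ℕ, 1 ≤ j ∧ r = q j} 3 ∧ q 1 = 3 ∧ q 0 = 4 ∧
      (3 : ℝ) < q 0 := by
  have hval : ∀ j : ℕ, 1 ≤ j → q j = (j : ℝ) * (j + 2) := by
    intro j hj
    have hne : ((j : ℝ) * (j + 2)) ≠ 0 := by
      have : (1 : ℝ) ≤ (j : ℝ) := by exact_mod_cast hj
      positivity
    rw [hq j, if_neg hne, sq, mul_div_assoc, div_self hne, mul_one]
  have h1 : q 1 = 3 := by rw [hval 1 le_rfl]; norm_num
  have h0 : q 0 = 4 := by rw [hq 0]; norm_num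
  refine ⟨⟨⟨1, le_rfl, h1.symm⟩, ?_⟩, h1, h0, by rw [h0]; norm_num⟩
  rintro r ⟨j, hj, rfl⟩
  rw [hval j hj]
  have hjr : (1 : ℝ) ≤ (j : ℝ) := by exact_mod_cast hj
  nlinarith
end

section
/- For ε > 0 let ψ_ε(t) = t^{3/2+ε} e^{−t} on (0,∞). Then ψ_ε ∈ H²₀((0,∞)) (i.e. ψ_ε, ψ_ε' ∈ L², ψ_ε'' ∈ L², ψ_ε(0) = ψ_ε'(0) = 0), and R(ψ_ε) → √(33/2) + 5/4 as ε → 0⁺, where R(ψ) = 2[∫₀^∞|ψ|²]^{1/2}[∫₀^∞|ψ''|² − (1/4)∫₀^∞ t⁻²|ψ'|²]^{1/2} / ∫₀^∞ t⁻²|ψ|² + 2∫₀^∞|ψ'|²/∫₀^∞ t⁻²|ψ|² − 1/4. -/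
open MeasureTheory Set Filter

noncomputable def S19J (p : ℝ) : ℝ := ∫ t in Ioi (0:ℝ), t ^ p * Real.exp (-(2*t))

lemma S19JI {p : ℝ} (hp : -1 < p) :
    IntegrableOn (fun t : ℝ => t ^ p * Real.exp (-(2*t))) (Ioi 0) := by
  have h := integrableOn_rpow_mul_exp_neg_mul_rpow hp (by norm_num : (0:ℝ) < 1) (by norm_num : (0:ℝ) < 2)
  simpa [Real.rpow_one, neg_mul] using h

lemma S19Jval {p : ℝ} (hp : -1 < p) :
    S19J p = (1/2:ℝ) ^ (p+1) * Real.Gamma (p+1) := by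
  have h := Real.integral_rpow_mul_exp_neg_mul_Ioi (by linarith : (0:ℝ) < p+1)
    (by norm_num : (0:ℝ) < 2)
  simpa [S19J, add_sub_cancel_right] using h

lemma S19sq3 {t : ℝ} (ht : 0 < t) (c₁ c₂ c₃ u v w : ℝ) :
    ((c₁ * t^u + c₂ * t^v + c₃ * t^w) * Real.exp (-t))^2
      = (c₁^2 * t^(u+u) + (2*c₁*c₂) * t^(u+v) + c₂^2 * t^(v+v) + (2*c₁*c₃) * t^(u+w)
          + (2*c₂*c₃) * t^(v+w) + c₃^2 * t^(w+w)) * Real.exp (-(2*t)) := by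
  rw [Real.rpow_add ht, Real.rpow_add ht, Real.rpow_add ht, Real.rpow_add ht,
    Real.rpow_add ht, Real.rpow_add ht, mul_pow, sq (Real.exp (-t)), ← Real.exp_add,
    show -t + -t = -(2*t) by ring]
  ring

lemma S19inv {t : ℝ} (ht : 0 < t) (p : ℝ) : t⁻¹^2 * t ^ p = t ^ (p - 2) := by
  rw [show p - 2 = p + (-(2:ℕ):ℝ) by push_cast; ring, Real.rpow_add ht,
    Real.rpow_neg ht.le, Real.rpow_natCast, inv_pow]
  ring

lemma S19comb {p₁ p₂ p₃ p₄ p₅ p₆ : ℝ} (c₁ c₂ c₃ c₄ c₅ c₆ : ℝ)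
    (h₁ : -1 < p₁) (h₂ : -1 < p₂) (h₃ : -1 < p₃) (h₄ : -1 < p₄) (h₅ : -1 < p₅) (h₆ : -1 < p₆) :
    IntegrableOn (fun t : ℝ => (c₁*t^p₁ + c₂*t^p₂ + c₃*t^p₃ + c₄*t^p₄ + c₅*t^p₅ + c₆*t^p₆)
        * Real.exp (-(2*t))) (Ioi 0) ∧
    (∫ t in Ioi (0:ℝ), (c₁*t^p₁ + c₂*t^p₂ + c₃*t^p₃ + c₄*t^p₄ + c₅*t^p₅ + c₆*t^p₆)
        * Real.exp (-(2*t)))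
      = c₁ * S19J p₁ + c₂ * S19J p₂ + c₃ * S19J p₃ + c₄ * S19J p₄ + c₅ * S19J p₅ + c₆ * S19J p₆ := by
  have I₁ := ((S19JI h₁).const_mul c₁)
  have I₂ := ((S19JI h₂).const_mul c₂)
  have I₃ := ((S19JI h₃).const_mul c₃)
  have I₄ := ((S19JI h₄).const_mul c₄)
  have I₅ := ((S19JI h₅).const_mul c₅)
  have I₆ := ((S19JI h₆).const_mul c₆)
  have key : (fun t : ℝ => (c₁*t^p₁ + c₂*t^p₂ + c₃*t^p₃ + c₄*t^p₄ + c₅*t^p₅ + c₆*t^p₆)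
      * Real.exp (-(2*t)))
      = fun t : ℝ => c₁*(t^p₁*Real.exp (-(2*t))) + (c₂*(t^p₂*Real.exp (-(2*t)))
        + (c₃*(t^p₃*Real.exp (-(2*t))) + (c₄*(t^p₄*Real.exp (-(2*t)))
        + (c₅*(t^p₅*Real.exp (-(2*t))) + c₆*(t^p₆*Real.exp (-(2*t))))))) := by
    funext t; ring
  constructor
  · rw [key]
    exact I₁.add (I₂.add (I₃.add (I₄.add (I₅.add I₆))))
  · have I₅₆ : Integrable (fun t : ℝ => c₅*(t^p₅*Real.exp (-(2*t))) + c₆*(t^p₆*Real.exp (-(2*t)))) (volume.restrict (Ioi 0)) := I₅.add I₆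
    have I₄₆ : Integrable (fun t : ℝ => c₄*(t^p₄*Real.exp (-(2*t))) + (c₅*(t^p₅*Real.exp (-(2*t))) + c₆*(t^p₆*Real.exp (-(2*t))))) (volume.restrict (Ioi 0)) := I₄.add I₅₆
    have I₃₆ : Integrable (fun t : ℝ => c₃*(t^p₃*Real.exp (-(2*t))) + (c₄*(t^p₄*Real.exp (-(2*t))) + (c₅*(t^p₅*Real.exp (-(2*t))) + c₆*(t^p₆*Real.exp (-(2*t)))))) (volume.restrict (Ioi 0)) := I₃.add I₄₆
    have I₂₆ : Integrable (fun t : ℝ => c₂*(t^p₂*Real.exp (-(2*t))) + (c₃*(t^p₃*Real.exp (-(2*t))) + (c₄*(t^p₄*Real.exp (-(2*t))) + (c₅*(t^p₅*Real.exp (-(2*t))) + c₆*(t^p₆*Real.exp (-(2*t))))))) (volume.restrict (Ioi 0)) := I₂.add I₃₆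
    rw [key, integral_add I₁ I₂₆, integral_add I₂ I₃₆, integral_add I₃ I₄₆,
      integral_add I₄ I₅₆, integral_add I₅ I₆,
      integral_const_mul, integral_const_mul, integral_const_mul, integral_const_mul,
      integral_const_mul, integral_const_mul]
    simp only [S19J]
    ring

lemma S19had (b : ℝ) {t : ℝ} (ht : 0 < t) :
    HasDerivAt (fun s : ℝ => s ^ b * Real.exp (-s))
      ((b * t^(b-1) - t^b) * Real.exp (-t)) t := by
  have h1 : HasDerivAt (fun s : ℝ => s ^ b) (b * t ^ (b-1)) t :=
    Real.hasDerivAt_rpow_const (Or.inl ht.ne')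
  have h2 : HasDerivAt (fun s : ℝ => Real.exp (-s)) (-Real.exp (-t)) t := by
    exact ((Real.hasDerivAt_exp (-t)).comp t (hasDerivAt_neg t)).congr_deriv (by simp)
  exact (h1.mul h2).congr_deriv (by ring)

lemma S19had2 (b : ℝ) {t : ℝ} (ht : 0 < t) :
    HasDerivAt (fun s : ℝ => (b * s ^ (b-1) - s ^ b) * Real.exp (-s))
      ((b*(b-1)*t^(b-2) - 2*b*t^(b-1) + t^b) * Real.exp (-t)) t := by
  have h1 := ((S19had (b-1) ht).const_mul b)
  have h2 := S19had b ht
  have h3 : HasDerivAt (fun s : ℝ => b * (s ^ (b-1) * Real.exp (-s)) - s ^ b * Real.exp (-s))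
      (b * (((b-1) * t^(b-1-1) - t^(b-1)) * Real.exp (-t)) - (b * t^(b-1) - t^b) * Real.exp (-t)) t :=
    h1.sub h2
  have h4 : (fun s : ℝ => b * (s ^ (b-1) * Real.exp (-s)) - s ^ b * Real.exp (-s))
      = fun s : ℝ => (b * s ^ (b-1) - s ^ b) * Real.exp (-s) := by funext s; ring
  rw [h4] at h3
  convert h3 using 1
  rw [show b-1-1 = b-2 by ring]
  ring

lemma S19d1 (ψ : ℝ → ℝ → ℝ)
    (hψ : ∀ ε > (0 : ℝ), ∀ t > (0 : ℝ), ψ ε t = t ^ ((3 : ℝ) / 2 + ε) * Real.exp (-t))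
    {ε : ℝ} (hε : 0 < ε) {t : ℝ} (ht : 0 < t) :
    deriv (ψ ε) t = (((3:ℝ)/2+ε) * t^((3:ℝ)/2+ε-1) - t^((3:ℝ)/2+ε)) * Real.exp (-t) := by
  have hev : ψ ε =ᶠ[nhds t] fun s => s ^ ((3:ℝ)/2+ε) * Real.exp (-s) :=
    eventually_of_mem (Ioi_mem_nhds ht) (fun s hs => hψ ε hε s hs)
  rw [hev.deriv_eq, (S19had _ ht).deriv]

lemma S19d2 (ψ : ℝ → ℝ → ℝ)
    (hψ : ∀ ε > (0 : ℝ), ∀ t > (0 : ℝ), ψ ε t = t ^ ((3 : ℝ) / 2 + ε) * Real.exp (-t))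
    {ε : ℝ} (hε : 0 < ε) {t : ℝ} (ht : 0 < t) :
    deriv (deriv (ψ ε)) t
      = (((3:ℝ)/2+ε)*((3:ℝ)/2+ε-1)*t^((3:ℝ)/2+ε-2) - 2*((3:ℝ)/2+ε)*t^((3:ℝ)/2+ε-1)
          + t^((3:ℝ)/2+ε)) * Real.exp (-t) := by
  have hev : deriv (ψ ε) =ᶠ[nhds t]
      fun s => (((3:ℝ)/2+ε) * s^((3:ℝ)/2+ε-1) - s^((3:ℝ)/2+ε)) * Real.exp (-s) :=
    eventually_of_mem (Ioi_mem_nhds ht) (fun s hs => S19d1 ψ hψ hε hs)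
  rw [hev.deriv_eq, (S19had2 _ ht).deriv]

lemma S19A (ψ : ℝ → ℝ → ℝ)
    (hψ : ∀ ε > (0 : ℝ), ∀ t > (0 : ℝ), ψ ε t = t ^ ((3 : ℝ) / 2 + ε) * Real.exp (-t))
    {ε : ℝ} (hε : 0 < ε) :
    IntegrableOn (fun t : ℝ => (ψ ε t)^2) (Ioi 0) ∧
    (∫ t in Ioi (0:ℝ), (ψ ε t)^2) = S19J (3+2*ε) := by
  have hEq : EqOn (fun t : ℝ => (ψ ε t)^2)
      (fun t : ℝ => ((1:ℝ)*t^((3:ℝ)+2*ε) + 0*t^(0:ℝ) + 0*t^(0:ℝ) + 0*t^(0:ℝ) + 0*t^(0:ℝ)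
        + 0*t^(0:ℝ)) * Real.exp (-(2*t))) (Ioi 0) := by
    intro t ht
    have ht' : (0:ℝ) < t := ht
    simp only
    rw [hψ ε hε t ht', mul_pow, pow_two (t ^ ((3:ℝ)/2+ε)), pow_two (Real.exp (-t)),
      ← Real.exp_add, ← Real.rpow_add ht', show -t + -t = -(2*t) by ring,
      show (3:ℝ)/2+ε + ((3:ℝ)/2+ε) = 3+2*ε by ring]
    ring
  have hc := S19comb (p₁ := 3+2*ε) (p₂ := 0) (p₃ := 0) (p₄ := 0) (p₅ := 0) (p₆ := 0)
    1 0 0 0 0 0 (by linarith) (by norm_num) (by norm_num) (by norm_num) (by norm_num) (by norm_num)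
  refine ⟨hc.1.congr_fun hEq.symm measurableSet_Ioi, ?_⟩
  rw [setIntegral_congr_fun measurableSet_Ioi hEq, hc.2]
  ring

lemma S19B (ψ : ℝ → ℝ → ℝ)
    (hψ : ∀ ε > (0 : ℝ), ∀ t > (0 : ℝ), ψ ε t = t ^ ((3 : ℝ) / 2 + ε) * Real.exp (-t))
    {ε : ℝ} (hε : 0 < ε) :
    IntegrableOn (fun t : ℝ => (deriv (ψ ε) t)^2) (Ioi 0) ∧
    (∫ t in Ioi (0:ℝ), (deriv (ψ ε) t)^2)
      = ((3:ℝ)/2+ε)^2 * S19J (1+2*ε) - 2*((3:ℝ)/2+ε) * S19J (2+2*ε) + S19J (3+2*ε) := by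
  have hEq : EqOn (fun t : ℝ => (deriv (ψ ε) t)^2)
      (fun t : ℝ => (((3:ℝ)/2+ε)^2*t^((1:ℝ)+2*ε) + (-2*((3:ℝ)/2+ε))*t^((2:ℝ)+2*ε)
        + 1*t^((3:ℝ)+2*ε) + 0*t^(0:ℝ) + 0*t^(0:ℝ) + 0*t^(0:ℝ)) * Real.exp (-(2*t))) (Ioi 0) := by
    intro t ht
    have ht' : (0:ℝ) < t := ht
    simp only
    rw [S19d1 ψ hψ hε ht',
      show (((3:ℝ)/2+ε) * t^((3:ℝ)/2+ε-1) - t^((3:ℝ)/2+ε))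
        = (((3:ℝ)/2+ε) * t^((3:ℝ)/2+ε-1) + (-1)*t^((3:ℝ)/2+ε) + 0*t^(0:ℝ)) by ring,
      S19sq3 ht',
      show (3:ℝ)/2+ε-1 + ((3:ℝ)/2+ε-1) = 1+2*ε by ring,
      show (3:ℝ)/2+ε-1 + ((3:ℝ)/2+ε) = 2+2*ε by ring,
      show (3:ℝ)/2+ε + ((3:ℝ)/2+ε) = 3+2*ε by ring,
      show (3:ℝ)/2+ε-1 + (0:ℝ) = (3:ℝ)/2+ε-1 by ring,
      show (3:ℝ)/2+ε + (0:ℝ) = (3:ℝ)/2+ε by ring,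
      show (0:ℝ) + (0:ℝ) = (0:ℝ) by ring]
    ring
  have hc := S19comb (p₁ := 1+2*ε) (p₂ := 2+2*ε) (p₃ := 3+2*ε) (p₄ := 0) (p₅ := 0) (p₆ := 0)
    (((3:ℝ)/2+ε)^2) (-2*((3:ℝ)/2+ε)) 1 0 0 0
    (by linarith) (by linarith) (by linarith) (by norm_num) (by norm_num) (by norm_num)
  refine ⟨hc.1.congr_fun hEq.symm measurableSet_Ioi, ?_⟩
  rw [setIntegral_congr_fun measurableSet_Ioi hEq, hc.2]
  ring

lemma S19C (ψ : ℝ → ℝ → ℝ)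
    (hψ : ∀ ε > (0 : ℝ), ∀ t > (0 : ℝ), ψ ε t = t ^ ((3 : ℝ) / 2 + ε) * Real.exp (-t))
    {ε : ℝ} (hε : 0 < ε) :
    IntegrableOn (fun t : ℝ => (deriv (deriv (ψ ε)) t)^2) (Ioi 0) ∧
    (∫ t in Ioi (0:ℝ), (deriv (deriv (ψ ε)) t)^2)
      = ((3:ℝ)/2+ε)^2*((1:ℝ)/2+ε)^2 * S19J (-1+2*ε)
        - 4*((3:ℝ)/2+ε)^2*((1:ℝ)/2+ε) * S19J (2*ε)
        + (4*((3:ℝ)/2+ε)^2 + 2*((3:ℝ)/2+ε)*((1:ℝ)/2+ε)) * S19J (1+2*ε)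
        - 4*((3:ℝ)/2+ε) * S19J (2+2*ε) + S19J (3+2*ε) := by
  have hEq : EqOn (fun t : ℝ => (deriv (deriv (ψ ε)) t)^2)
      (fun t : ℝ => (((3:ℝ)/2+ε)^2*((1:ℝ)/2+ε)^2*t^(-(1:ℝ)+2*ε)
        + (-4*((3:ℝ)/2+ε)^2*((1:ℝ)/2+ε))*t^(2*ε)
        + (4*((3:ℝ)/2+ε)^2)*t^((1:ℝ)+2*ε)
        + (2*((3:ℝ)/2+ε)*((1:ℝ)/2+ε))*t^((1:ℝ)+2*ε)
        + (-4*((3:ℝ)/2+ε))*t^((2:ℝ)+2*ε)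
        + 1*t^((3:ℝ)+2*ε)) * Real.exp (-(2*t))) (Ioi 0) := by
    intro t ht
    have ht' : (0:ℝ) < t := ht
    simp only
    rw [S19d2 ψ hψ hε ht',
      show (((3:ℝ)/2+ε)*((3:ℝ)/2+ε-1)*t^((3:ℝ)/2+ε-2) - 2*((3:ℝ)/2+ε)*t^((3:ℝ)/2+ε-1)
          + t^((3:ℝ)/2+ε))
        = ((((3:ℝ)/2+ε)*((3:ℝ)/2+ε-1)) * t^((3:ℝ)/2+ε-2)
          + (-(2*((3:ℝ)/2+ε)))*t^((3:ℝ)/2+ε-1) + 1*t^((3:ℝ)/2+ε)) by ring,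
      S19sq3 ht',
      show (3:ℝ)/2+ε-2 + ((3:ℝ)/2+ε-2) = -1+2*ε by ring,
      show (3:ℝ)/2+ε-2 + ((3:ℝ)/2+ε-1) = 2*ε by ring,
      show (3:ℝ)/2+ε-1 + ((3:ℝ)/2+ε-1) = 1+2*ε by ring,
      show (3:ℝ)/2+ε-2 + ((3:ℝ)/2+ε) = 1+2*ε by ring,
      show (3:ℝ)/2+ε-1 + ((3:ℝ)/2+ε) = 2+2*ε by ring,
      show (3:ℝ)/2+ε + ((3:ℝ)/2+ε) = 3+2*ε by ring]
    ring
  have hc := S19comb (p₁ := -1+2*ε) (p₂ := 2*ε) (p₃ := 1+2*ε) (p₄ := 1+2*ε) (p₅ := 2+2*ε)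
    (p₆ := 3+2*ε)
    (((3:ℝ)/2+ε)^2*((1:ℝ)/2+ε)^2) (-4*((3:ℝ)/2+ε)^2*((1:ℝ)/2+ε)) (4*((3:ℝ)/2+ε)^2)
    (2*((3:ℝ)/2+ε)*((1:ℝ)/2+ε)) (-4*((3:ℝ)/2+ε)) 1
    (by linarith) (by linarith) (by linarith) (by linarith) (by linarith) (by linarith)
  refine ⟨hc.1.congr_fun hEq.symm measurableSet_Ioi, ?_⟩
  rw [setIntegral_congr_fun measurableSet_Ioi hEq, hc.2]
  ring

lemma S19D (ψ : ℝ → ℝ → ℝ)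
    (hψ : ∀ ε > (0 : ℝ), ∀ t > (0 : ℝ), ψ ε t = t ^ ((3 : ℝ) / 2 + ε) * Real.exp (-t))
    {ε : ℝ} (hε : 0 < ε) :
    IntegrableOn (fun t : ℝ => t⁻¹^2 * (ψ ε t)^2) (Ioi 0) ∧
    (∫ t in Ioi (0:ℝ), t⁻¹^2 * (ψ ε t)^2) = S19J (1+2*ε) := by
  have hEq : EqOn (fun t : ℝ => t⁻¹^2 * (ψ ε t)^2)
      (fun t : ℝ => ((1:ℝ)*t^((1:ℝ)+2*ε) + 0*t^(0:ℝ) + 0*t^(0:ℝ) + 0*t^(0:ℝ) + 0*t^(0:ℝ)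
        + 0*t^(0:ℝ)) * Real.exp (-(2*t))) (Ioi 0) := by
    intro t ht
    have ht' : (0:ℝ) < t := ht
    simp only
    rw [hψ ε hε t ht', mul_pow, pow_two (t ^ ((3:ℝ)/2+ε)), pow_two (Real.exp (-t)),
      ← Real.exp_add, ← Real.rpow_add ht', show -t + -t = -(2*t) by ring,
      show (3:ℝ)/2+ε + ((3:ℝ)/2+ε) = 3+2*ε by ring,
      show t^((1:ℝ)+2*ε) = t⁻¹^2 * t^((3:ℝ)+2*ε) by
        rw [S19inv ht', show (3:ℝ)+2*ε-2 = 1+2*ε by ring]]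
    ring
  have hc := S19comb (p₁ := 1+2*ε) (p₂ := 0) (p₃ := 0) (p₄ := 0) (p₅ := 0) (p₆ := 0)
    1 0 0 0 0 0 (by linarith) (by norm_num) (by norm_num) (by norm_num) (by norm_num) (by norm_num)
  refine ⟨hc.1.congr_fun hEq.symm measurableSet_Ioi, ?_⟩
  rw [setIntegral_congr_fun measurableSet_Ioi hEq, hc.2]
  ring

lemma S19E (ψ : ℝ → ℝ → ℝ)
    (hψ : ∀ ε > (0 : ℝ), ∀ t > (0 : ℝ), ψ ε t = t ^ ((3 : ℝ) / 2 + ε) * Real.exp (-t))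
    {ε : ℝ} (hε : 0 < ε) :
    IntegrableOn (fun t : ℝ => t⁻¹^2 * (deriv (ψ ε) t)^2) (Ioi 0) ∧
    (∫ t in Ioi (0:ℝ), t⁻¹^2 * (deriv (ψ ε) t)^2)
      = ((3:ℝ)/2+ε)^2 * S19J (-1+2*ε) - 2*((3:ℝ)/2+ε) * S19J (2*ε) + S19J (1+2*ε) := by
  have hEq : EqOn (fun t : ℝ => t⁻¹^2 * (deriv (ψ ε) t)^2)
      (fun t : ℝ => (((3:ℝ)/2+ε)^2*t^(-(1:ℝ)+2*ε) + (-2*((3:ℝ)/2+ε))*t^(2*ε)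
        + 1*t^((1:ℝ)+2*ε) + 0*t^(0:ℝ) + 0*t^(0:ℝ) + 0*t^(0:ℝ)) * Real.exp (-(2*t))) (Ioi 0) := by
    intro t ht
    have ht' : (0:ℝ) < t := ht
    simp only
    rw [S19d1 ψ hψ hε ht',
      show (((3:ℝ)/2+ε) * t^((3:ℝ)/2+ε-1) - t^((3:ℝ)/2+ε))
        = (((3:ℝ)/2+ε) * t^((3:ℝ)/2+ε-1) + (-1)*t^((3:ℝ)/2+ε) + 0*t^(0:ℝ)) by ring,
      S19sq3 ht',
      show (3:ℝ)/2+ε-1 + ((3:ℝ)/2+ε-1) = 1+2*ε by ring,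
      show (3:ℝ)/2+ε-1 + ((3:ℝ)/2+ε) = 2+2*ε by ring,
      show (3:ℝ)/2+ε + ((3:ℝ)/2+ε) = 3+2*ε by ring,
      show t^(-(1:ℝ)+2*ε) = t⁻¹^2 * t^((1:ℝ)+2*ε) by
        rw [S19inv ht', show (1:ℝ)+2*ε-2 = -1+2*ε by ring],
      show t^(2*ε) = t⁻¹^2 * t^((2:ℝ)+2*ε) by
        rw [S19inv ht', show (2:ℝ)+2*ε-2 = 2*ε by ring],
      show t^((1:ℝ)+2*ε) = t⁻¹^2 * t^((3:ℝ)+2*ε) by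
        rw [S19inv ht', show (3:ℝ)+2*ε-2 = 1+2*ε by ring]]
    ring
  have hc := S19comb (p₁ := -1+2*ε) (p₂ := 2*ε) (p₃ := 1+2*ε) (p₄ := 0) (p₅ := 0) (p₆ := 0)
    (((3:ℝ)/2+ε)^2) (-2*((3:ℝ)/2+ε)) 1 0 0 0
    (by linarith) (by linarith) (by linarith) (by norm_num) (by norm_num) (by norm_num)
  refine ⟨hc.1.congr_fun hEq.symm measurableSet_Ioi, ?_⟩
  rw [setIntegral_congr_fun measurableSet_Ioi hEq, hc.2]
  ring

lemma S19Glim (c : ℝ) (hc : 0 < c) :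
    Tendsto (fun ε : ℝ => Real.Gamma (c + 2*ε)) (nhds 0) (nhds (Real.Gamma c)) := by
  have h1 : ContinuousAt Real.Gamma c := by
    refine (Real.differentiableAt_Gamma fun m => ?_).continuousAt
    have : (0:ℝ) ≤ m := Nat.cast_nonneg m
    intro h; rw [h] at hc; linarith
  have h2 : Tendsto (fun ε : ℝ => c + 2*ε) (nhds 0) (nhds c) := by
    have hcont : Continuous (fun ε : ℝ => c + 2*ε) := by continuity
    simpa using hcont.tendsto 0
  exact h1.tendsto.comp h2

lemma S19Plim (c : ℝ) :
    Tendsto (fun ε : ℝ => ((1:ℝ)/2) ^ (c + 2*ε)) (nhds 0) (nhds (((1:ℝ)/2) ^ c)) := by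
  have key : ∀ x : ℝ, ((1:ℝ)/2) ^ x = Real.exp (Real.log (1/2) * x) := fun x => by
    rw [Real.rpow_def_of_pos (by norm_num)]
  simp_rw [key]
  have h2 : Tendsto (fun ε : ℝ => Real.log (1/2) * (c + 2*ε)) (nhds 0)
      (nhds (Real.log (1/2) * c)) := by
    have hcont : Continuous (fun ε : ℝ => Real.log (1/2) * (c + 2*ε)) := by continuity
    simpa using hcont.tendsto 0
  exact (Real.continuous_exp.tendsto _).comp h2

lemma S19Jlim (c : ℝ) (hc : -1 < c) :
    Tendsto (fun ε : ℝ => S19J (c+2*ε)) (nhdsWithin 0 (Ioi 0))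
      (nhds (((1:ℝ)/2)^(c+1) * Real.Gamma (c+1))) := by
  have h := ((S19Plim (c+1)).mul (S19Glim (c+1) (by linarith))).mono_left
    (nhdsWithin_le_nhds (s := Ioi (0:ℝ)))
  refine h.congr' ?_
  filter_upwards [self_mem_nhdsWithin] with ε hε
  have hε' : (0:ℝ) < ε := hε
  rw [S19Jval (by linarith), show c+2*ε+1 = c+1+2*ε by ring]

lemma S19Jdiv :
    Tendsto (fun ε : ℝ => ε * S19J (-1+2*ε)) (nhdsWithin 0 (Ioi 0)) (nhds (1/2)) := by
  have h := (((S19Plim 0).mul (S19Glim 1 one_pos)).div_const 2).mono_left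
    (nhdsWithin_le_nhds (s := Ioi (0:ℝ)))
  have h2 : (((1:ℝ)/2) ^ (0:ℝ) * Real.Gamma 1 / 2) = 1/2 := by
    rw [Real.rpow_zero, Real.Gamma_one]; norm_num
  rw [h2] at h
  refine h.congr' ?_
  filter_upwards [self_mem_nhdsWithin] with ε hε
  have hε' : (0:ℝ) < ε := hε
  have hg : Real.Gamma (2*ε+1) = 2*ε * Real.Gamma (2*ε) :=
    Real.Gamma_add_one (by positivity : (0:ℝ) < 2*ε).ne'
  rw [S19Jval (by linarith), show -1+2*ε+1 = 2*ε by ring, show (0:ℝ)+2*ε = 2*ε by ring,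
    show (1:ℝ)+2*ε = 2*ε+1 by ring, hg]
  ring

lemma S19t0 (ψ : ℝ → ℝ → ℝ)
    (hψ : ∀ ε > (0 : ℝ), ∀ t > (0 : ℝ), ψ ε t = t ^ ((3 : ℝ) / 2 + ε) * Real.exp (-t))
    {ε : ℝ} (hε : 0 < ε) :
    Tendsto (ψ ε) (nhdsWithin 0 (Ioi 0)) (nhds 0) := by
  have h1 : ContinuousAt (fun t : ℝ => t ^ ((3:ℝ)/2+ε) * Real.exp (-t)) 0 :=
    (Real.continuousAt_rpow_const 0 _ (Or.inr (by positivity))).mul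
      ((Real.continuous_exp.comp continuous_neg).continuousAt)
  have h2 := (h1.tendsto.mono_left (nhdsWithin_le_nhds (s := Ioi (0:ℝ))))
  have h3 : ((0:ℝ) ^ ((3:ℝ)/2+ε) * Real.exp (-0)) = 0 := by
    rw [Real.zero_rpow (by positivity)]; ring
  rw [h3] at h2
  refine h2.congr' ?_
  filter_upwards [self_mem_nhdsWithin] with t ht
  exact (hψ ε hε t ht).symm

lemma S19t1 (ψ : ℝ → ℝ → ℝ)
    (hψ : ∀ ε > (0 : ℝ), ∀ t > (0 : ℝ), ψ ε t = t ^ ((3 : ℝ) / 2 + ε) * Real.exp (-t))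
    {ε : ℝ} (hε : 0 < ε) :
    Tendsto (deriv (ψ ε)) (nhdsWithin 0 (Ioi 0)) (nhds 0) := by
  have h1 : ContinuousAt
      (fun t : ℝ => (((3:ℝ)/2+ε) * t^((3:ℝ)/2+ε-1) - t^((3:ℝ)/2+ε)) * Real.exp (-t)) 0 :=
    (((Real.continuousAt_rpow_const 0 _ (Or.inr (by linarith))).const_mul _).sub
      (Real.continuousAt_rpow_const 0 _ (Or.inr (by positivity)))).mul
      ((Real.continuous_exp.comp continuous_neg).continuousAt)
  have h2 := (h1.tendsto.mono_left (nhdsWithin_le_nhds (s := Ioi (0:ℝ))))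
  have h3 : ((((3:ℝ)/2+ε) * (0:ℝ)^((3:ℝ)/2+ε-1) - (0:ℝ)^((3:ℝ)/2+ε)) * Real.exp (-0)) = 0 := by
    rw [Real.zero_rpow (show (3:ℝ)/2+ε-1 ≠ 0 by intro h; linarith),
      Real.zero_rpow (show (3:ℝ)/2+ε ≠ 0 by intro h; linarith)]; ring
  rw [h3] at h2
  refine h2.congr' ?_
  filter_upwards [self_mem_nhdsWithin] with t ht
  exact (S19d1 ψ hψ hε ht).symm

lemma S19G3 : Real.Gamma 3 = 2 := by
  rw [show (3:ℝ) = 2+1 by norm_num, Real.Gamma_add_one (by norm_num), Real.Gamma_two]; norm_num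

lemma S19G4 : Real.Gamma 4 = 6 := by
  rw [show (4:ℝ) = 3+1 by norm_num, Real.Gamma_add_one (by norm_num), S19G3]; norm_num

lemma S19l0 : Tendsto (fun ε : ℝ => S19J (2*ε)) (nhdsWithin 0 (Ioi 0)) (nhds (1/2)) := by
  have h := S19Jlim 0 (by norm_num)
  simp only [zero_add] at h
  convert h using 2
  rw [Real.rpow_one, Real.Gamma_one]; norm_num

lemma S19l1 : Tendsto (fun ε : ℝ => S19J (1+2*ε)) (nhdsWithin 0 (Ioi 0)) (nhds (1/4)) := by
  have h := S19Jlim 1 (by norm_num)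
  convert h using 2
  rw [show (1:ℝ)+1 = ((2:ℕ):ℝ) by norm_num, Real.rpow_natCast,
    show (((2:ℕ):ℝ)) = (2:ℝ) by norm_num, Real.Gamma_two]
  norm_num

lemma S19l2 : Tendsto (fun ε : ℝ => S19J (2+2*ε)) (nhdsWithin 0 (Ioi 0)) (nhds (1/4)) := by
  have h := S19Jlim 2 (by norm_num)
  convert h using 2
  rw [show (2:ℝ)+1 = ((3:ℕ):ℝ) by norm_num, Real.rpow_natCast,
    show (((3:ℕ):ℝ)) = (3:ℝ) by norm_num, S19G3]
  norm_num

lemma S19l3 : Tendsto (fun ε : ℝ => S19J (3+2*ε)) (nhdsWithin 0 (Ioi 0)) (nhds (3/8)) := by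
  have h := S19Jlim 3 (by norm_num)
  convert h using 2
  rw [show (3:ℝ)+1 = ((4:ℕ):ℝ) by norm_num, Real.rpow_natCast,
    show (((4:ℕ):ℝ)) = (4:ℝ) by norm_num, S19G4]
  norm_num

lemma S19cpoly (f : ℝ → ℝ) (hf : Continuous f) :
    Tendsto f (nhdsWithin 0 (Ioi 0)) (nhds (f 0)) :=
  (hf.tendsto 0).mono_left nhdsWithin_le_nhds


/-- `ψ_ε(t) = t^{3/2+ε} e^{−t}` belongs to `H²₀((0,∞))`
(its square, the squares of its first and second derivatives, and the Hardy
weighted squares are integrable on `(0,∞)`, and `ψ_ε, ψ_ε' → 0` at `0⁺`), and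
`R(ψ_ε) → √(33/2) + 5/4` as `ε → 0⁺`, where
`R(ψ) = 2(∫|ψ|²)^{1/2}(∫|ψ''|² − (1/4)∫t⁻²|ψ'|²)^{1/2}/∫t⁻²|ψ|²
  + 2∫|ψ'|²/∫t⁻²|ψ|² − 1/4`. -/
theorem stmt19 (ψ : ℝ → ℝ → ℝ)
    (hψ : ∀ ε > (0 : ℝ), ∀ t > (0 : ℝ), ψ ε t = t ^ ((3 : ℝ) / 2 + ε) * Real.exp (-t))
    (R : (ℝ → ℝ) → ℝ)
    (hR : ∀ φ : ℝ → ℝ, R φ =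
      2 * Real.sqrt (∫ t in Ioi (0 : ℝ), (φ t) ^ 2) *
        Real.sqrt ((∫ t in Ioi (0 : ℝ), (deriv (deriv φ) t) ^ 2) -
          (1 / 4) * ∫ t in Ioi (0 : ℝ), t⁻¹ ^ 2 * (deriv φ t) ^ 2) /
        (∫ t in Ioi (0 : ℝ), t⁻¹ ^ 2 * (φ t) ^ 2) +
      2 * (∫ t in Ioi (0 : ℝ), (deriv φ t) ^ 2) /
        (∫ t in Ioi (0 : ℝ), t⁻¹ ^ 2 * (φ t) ^ 2) - 1 / 4) :
    (∀ ε > (0 : ℝ),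
      IntegrableOn (fun t => (ψ ε t) ^ 2) (Ioi 0) ∧
      IntegrableOn (fun t => (deriv (ψ ε) t) ^ 2) (Ioi 0) ∧
      IntegrableOn (fun t => (deriv (deriv (ψ ε)) t) ^ 2) (Ioi 0) ∧
      IntegrableOn (fun t => t⁻¹ ^ 2 * (ψ ε t) ^ 2) (Ioi 0) ∧
      IntegrableOn (fun t => t⁻¹ ^ 2 * (deriv (ψ ε) t) ^ 2) (Ioi 0) ∧
      Tendsto (ψ ε) (nhdsWithin 0 (Ioi 0)) (nhds 0) ∧
      Tendsto (deriv (ψ ε)) (nhdsWithin 0 (Ioi 0)) (nhds 0)) ∧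
    Tendsto (fun ε => R (ψ ε)) (nhdsWithin 0 (Ioi 0))
      (nhds (Real.sqrt (33 / 2) + 5 / 4)) := by
  constructor
  · intro ε hε
    exact ⟨(S19A ψ hψ hε).1, (S19B ψ hψ hε).1, (S19C ψ hψ hε).1, (S19D ψ hψ hε).1,
      (S19E ψ hψ hε).1, S19t0 ψ hψ hε, S19t1 ψ hψ hε⟩
  · have hCE : Tendsto (fun ε : ℝ =>
        (((3:ℝ)/2+ε)^2*((1:ℝ)/2+ε)^2 * S19J (-1+2*ε)
          - 4*((3:ℝ)/2+ε)^2*((1:ℝ)/2+ε) * S19J (2*ε)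
          + (4*((3:ℝ)/2+ε)^2 + 2*((3:ℝ)/2+ε)*((1:ℝ)/2+ε)) * S19J (1+2*ε)
          - 4*((3:ℝ)/2+ε) * S19J (2+2*ε) + S19J (3+2*ε))
        - 1/4 * (((3:ℝ)/2+ε)^2 * S19J (-1+2*ε) - 2*((3:ℝ)/2+ε) * S19J (2*ε) + S19J (1+2*ε)))
        (nhdsWithin 0 (Ioi 0)) (nhds (11/16)) := by
      have h : Tendsto (fun ε : ℝ =>
          ((3:ℝ)/2+ε)^2*((1:ℝ)+ε) * (ε * S19J (-1+2*ε))
          + (-4*((3:ℝ)/2+ε)^2*((1:ℝ)/2+ε) + ((3:ℝ)/2+ε)/2) * S19J (2*ε)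
          + (4*((3:ℝ)/2+ε)^2 + 2*((3:ℝ)/2+ε)*((1:ℝ)/2+ε) - 1/4) * S19J (1+2*ε)
          + (-4*((3:ℝ)/2+ε)) * S19J (2+2*ε) + S19J (3+2*ε))
          (nhdsWithin 0 (Ioi 0)) (nhds (11/16 : ℝ)) := by
        have h1 := (S19cpoly (fun ε : ℝ => ((3:ℝ)/2+ε)^2*((1:ℝ)+ε)) (by fun_prop)).mul S19Jdiv
        have h2 := (S19cpoly (fun ε : ℝ => -4*((3:ℝ)/2+ε)^2*((1:ℝ)/2+ε) + ((3:ℝ)/2+ε)/2)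
          (by fun_prop)).mul S19l0
        have h3 := (S19cpoly (fun ε : ℝ => 4*((3:ℝ)/2+ε)^2 + 2*((3:ℝ)/2+ε)*((1:ℝ)/2+ε) - 1/4)
          (by fun_prop)).mul S19l1
        have h4 := (S19cpoly (fun ε : ℝ => -4*((3:ℝ)/2+ε)) (by fun_prop)).mul S19l2
        have hh := (((h1.add h2).add h3).add h4).add S19l3
        convert hh using 2
        norm_num
      exact h.congr (fun ε => by ring)
    have hB : Tendsto (fun ε : ℝ => ((3:ℝ)/2+ε)^2 * S19J (1+2*ε)
        - 2*((3:ℝ)/2+ε) * S19J (2+2*ε) + S19J (3+2*ε))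
        (nhdsWithin 0 (Ioi 0)) (nhds (3/16 : ℝ)) := by
      have h1 := (S19cpoly (fun ε : ℝ => ((3:ℝ)/2+ε)^2) (by fun_prop)).mul S19l1
      have h2 := (S19cpoly (fun ε : ℝ => 2*((3:ℝ)/2+ε)) (by fun_prop)).mul S19l2
      have hh := (h1.sub h2).add S19l3
      convert hh using 2
      norm_num
    have h5 := ((((tendsto_const_nhds (x := (2:ℝ))).mul S19l3.sqrt).mul hCE.sqrt).div S19l1
        (by norm_num)).add
      (((tendsto_const_nhds (x := (2:ℝ))).mul hB).div S19l1 (by norm_num))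
    have h6 := h5.sub (tendsto_const_nhds (x := (1/4:ℝ)))
    have hv : 2 * Real.sqrt (3/8) * Real.sqrt (11/16) / (1/4) + 2*(3/16)/(1/4) - 1/4
        = Real.sqrt (33/2) + 5/4 := by
      have e1 : Real.sqrt (3/8) * Real.sqrt (11/16) = Real.sqrt (33/128) := by
        rw [← Real.sqrt_mul (by norm_num)]; norm_num
      have e2 : Real.sqrt (33/2) = 8 * Real.sqrt (33/128) := by
        rw [show (33/2:ℝ) = 64*(33/128) by norm_num, Real.sqrt_mul (by norm_num),
          show Real.sqrt 64 = 8 by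
            rw [show (64:ℝ) = 8^2 by norm_num, Real.sqrt_sq (by norm_num)]]
      rw [mul_assoc, e1, e2]; ring
    rw [hv] at h6
    refine h6.congr' ?_
    filter_upwards [self_mem_nhdsWithin] with ε hε
    have hε' : (0:ℝ) < ε := hε
    rw [hR (ψ ε), (S19A ψ hψ hε').2, (S19B ψ hψ hε').2, (S19C ψ hψ hε').2,
      (S19D ψ hψ hε').2, (S19E ψ hψ hε').2]
    simp only [Pi.div_apply]
end
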